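/- Let p ≥ 1 and let [ℓ_1,u_1),…,[ℓ_p,u_p) be nonempty half-open real intervals sorted so that ℓ_1 ≤ … ≤ ℓ_p. Suppose 1 = b_1 < b_2 < … < b_{k+1} = p+1 are indices such that for every j ∈ {1,…,k} the block intersection ⋂_{b_j ≤ g < b_{j+1}} [ℓ_g, u_g) is nonempty, and for every j ∈ {1,…,k−1} one has ℓ_{b_{j+1}} ≥ min_{b_j ≤ g < b_{j+1}} u_g. Then the piercing number of the family equals k, and for any choice of points s_j ∈ ⋂_{b_j ≤ g < b_{j+1}} [ℓ_g, u_g) (j = 1,…,k), the set {s_1,…,s_k} is a minimum-cardinality piercing set of the family. -/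

import Mathlib

/-!
In block `j` pick an index `m j` at which `u` is minimal. For `i < j` the separation hypothesis
and sortedness give `u (m i) ≤ ℓ (b (i + 1)) ≤ ℓ (m j)`, so the intervals `I (m 1), …, I (m k)`
lie strictly from left to right: every piercing set needs `k` distinct points for them.
Conversely, points `s j` of the block intersections pierce every interval, and they are distinct
because `s j ∈ I (m j)`.
-/

open Set

section SeparatedIntervals

variable {ι α : Type*} [LinearOrder ι] [Preorder α] {a c : ι → α}

lemma strictMonoOn_of_mem_Ico {s : Set ι} {x : ι → α}
    (hsep : ∀ i ∈ s, ∀ j ∈ s, i < j → c i ≤ a j) (hx : ∀ i ∈ s, x i ∈ Ico (a i) (c i)) :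
    StrictMonoOn x s :=
  fun i hi j hj hij => ((hx i hi).2.trans_le (hsep i hi j hj hij)).trans_le (hx j hj).1

lemma Finset.card_le_card_of_forall_exists_mem_Ico {t : Finset ι} {S : Finset α}
    (hsep : ∀ i ∈ t, ∀ j ∈ t, i < j → c i ≤ a j) (hS : ∀ i ∈ t, ∃ y ∈ S, y ∈ Set.Ico (a i) (c i)) :
    t.card ≤ S.card := by
  obtain rfl | ⟨i₀, hi₀⟩ := t.eq_empty_or_nonempty
  · exact S.card.zero_le
  have : Nonempty α := ⟨(hS i₀ hi₀).choose⟩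
  choose! y hyS hy using hS
  exact Finset.card_le_card_of_injOn y hyS (strictMonoOn_of_mem_Ico hsep hy).injOn

end SeparatedIntervals

lemma Nat.exists_le_lt_succ_of_le_of_lt {α : Type*} [LinearOrder α] (f : ℕ → α) {m n : ℕ}
    {x : α} (hmn : m ≤ n) (hm : f m ≤ x) (hn : x < f n) :
    ∃ j, m ≤ j ∧ j < n ∧ f j ≤ x ∧ x < f (j + 1) := by
  induction n, hmn using Nat.le_induction with
  | base => exact absurd hm hn.not_ge
  | succ n hmn ih =>
    by_cases hxn : x < f n
    · obtain ⟨j, hmj, hjn, hfj⟩ := ih hxn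
      exact ⟨j, hmj, hjn.trans n.lt_succ_self, hfj⟩
    · exact ⟨n, hmn, n.lt_succ_self, not_lt.1 hxn, hn⟩

section Blocks

variable {p k : ℕ} {b : ℕ → ℕ}

lemma monotoneOn_Icc_of_lt_succ (hmono : ∀ j, 1 ≤ j → j ≤ k → b j < b (j + 1)) :
    MonotoneOn b (Icc 1 (k + 1)) :=
  (strictMonoOn_of_lt_add_one ordConnected_Icc fun j _ hj hj' =>
    hmono j hj.1 (Nat.le_of_succ_le_succ hj'.2)).monotoneOn

lemma Ico_block_subset_Icc (hb1 : b 1 = 1) (hbk1 : b (k + 1) = p + 1)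
    (hmono : ∀ j, 1 ≤ j → j ≤ k → b j < b (j + 1)) {j : ℕ} (hj : j ∈ Finset.Icc 1 k) :
    Ico (b j) (b (j + 1)) ⊆ Icc 1 p := by
  rw [Finset.mem_Icc] at hj
  have hb := monotoneOn_Icc_of_lt_succ hmono
  have h1j : b 1 ≤ b j := hb ⟨le_rfl, by omega⟩ ⟨hj.1, by omega⟩ hj.1
  have hjk : b (j + 1) ≤ b (k + 1) := hb ⟨by omega, by omega⟩ ⟨by omega, le_rfl⟩ (by omega)
  exact fun g ⟨hg1, hg2⟩ => ⟨by omega, by omega⟩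

lemma exists_mem_Ico_block (hb1 : b 1 = 1) (hbk1 : b (k + 1) = p + 1) {h : ℕ}
    (hh : h ∈ Icc 1 p) :
    ∃ j ∈ Finset.Icc 1 k, h ∈ Ico (b j) (b (j + 1)) := by
  obtain ⟨j, h1j, hjk, hjh, hhj⟩ :=
    Nat.exists_le_lt_succ_of_le_of_lt b (Nat.le_add_left 1 k) (hb1 ▸ hh.1) (hbk1 ▸ Nat.lt_succ_of_le hh.2)
  exact ⟨j, Finset.mem_Icc.2 ⟨h1j, by omega⟩, hjh, hhj⟩

lemma exists_block_representatives {ℓ u : ℕ → ℝ} (hb1 : b 1 = 1) (hbk1 : b (k + 1) = p + 1)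
    (hmono : ∀ j, 1 ≤ j → j ≤ k → b j < b (j + 1))
    (hsorted : ∀ h, 1 ≤ h → h < p → ℓ h ≤ ℓ (h + 1))
    (hsep : ∀ j, 1 ≤ j → j ≤ k - 1 →
      sInf (u '' Ico (b j) (b (j + 1))) ≤ ℓ (b (j + 1))) :
    ∃ m : ℕ → ℕ, (∀ j ∈ Finset.Icc 1 k, m j ∈ Ico (b j) (b (j + 1))) ∧
      ∀ i ∈ Finset.Icc 1 k, ∀ j ∈ Finset.Icc 1 k, i < j → u (m i) ≤ ℓ (m j) := by
  have hℓ : MonotoneOn ℓ (Icc 1 p) :=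
    monotoneOn_of_le_add_one ordConnected_Icc fun h _ hh hh' => hsorted h hh.1 hh'.2
  have hmin : ∀ j ∈ Finset.Icc 1 k,
      ∃ g ∈ Ico (b j) (b (j + 1)), u g = sInf (u '' Ico (b j) (b (j + 1))) := fun j hj =>
    have hj' := Finset.mem_Icc.1 hj
    ((nonempty_Ico.2 (hmono j hj'.1 hj'.2)).image u).csInf_mem ((finite_Ico _ _).image u)
  choose! m hm hmu using hmin
  refine ⟨m, hm, fun i hi j hj hij => ?_⟩
  have hi' := Finset.mem_Icc.1 hi
  have hj' := Finset.mem_Icc.1 hj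
  have hmi := Ico_block_subset_Icc hb1 hbk1 hmono hi (hm i hi)
  have hmj := Ico_block_subset_Icc hb1 hbk1 hmono hj (hm j hj)
  have hbm : b (i + 1) ≤ m j :=
    (monotoneOn_Icc_of_lt_succ hmono ⟨by omega, by omega⟩ ⟨hj'.1, by omega⟩ hij).trans (hm j hj).1
  calc u (m i) = sInf (u '' Ico (b i) (b (i + 1))) := hmu i hi
    _ ≤ ℓ (b (i + 1)) := hsep i hi'.1 (by omega)
    _ ≤ ℓ (m j) := hℓ ⟨hmi.1.trans (hm i hi).2.le, hbm.trans hmj.2⟩ hmj hbm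

end Blocks

theorem min_intset_blocks_general
    (p : ℕ) (ℓ u : ℕ → ℝ)
    (hsorted : ∀ h, 1 ≤ h → h < p → ℓ h ≤ ℓ (h + 1))
    (b : ℕ → ℕ) (k : ℕ)
    (hb1 : b 1 = 1) (hbk1 : b (k + 1) = p + 1)
    (hmono : ∀ j, 1 ≤ j → j ≤ k → b j < b (j + 1))
    (hblock : ∀ j, 1 ≤ j → j ≤ k →
      (⋂ g ∈ Set.Ico (b j) (b (j + 1)), Set.Ico (ℓ g) (u g)).Nonempty)
    (hsep : ∀ j, 1 ≤ j → j ≤ k - 1 →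
      sInf (u '' Set.Ico (b j) (b (j + 1))) ≤ ℓ (b (j + 1))) :
    sInf {n | ∃ S : Finset ℝ, S.card = n ∧
        ∀ h, 1 ≤ h → h ≤ p → ∃ x ∈ S, x ∈ Set.Ico (ℓ h) (u h)} = k ∧
    ∀ s : ℕ → ℝ,
      (∀ j, 1 ≤ j → j ≤ k →
        s j ∈ ⋂ g ∈ Set.Ico (b j) (b (j + 1)), Set.Ico (ℓ g) (u g)) →
      (∀ h, 1 ≤ h → h ≤ p →
        ∃ x ∈ (Finset.Icc 1 k).image s, x ∈ Set.Ico (ℓ h) (u h)) ∧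
      ((Finset.Icc 1 k).image s).card = k := by
  obtain ⟨m, hm, hmsep⟩ := exists_block_representatives hb1 hbk1 hmono hsorted hsep
  have hpierce : ∀ s : ℕ → ℝ, (∀ j, 1 ≤ j → j ≤ k →
      s j ∈ ⋂ g ∈ Set.Ico (b j) (b (j + 1)), Set.Ico (ℓ g) (u g)) →
      (∀ h, 1 ≤ h → h ≤ p → ∃ x ∈ (Finset.Icc 1 k).image s, x ∈ Set.Ico (ℓ h) (u h)) ∧
      ((Finset.Icc 1 k).image s).card = k := by
    intro s hs
    have hs' : ∀ j ∈ Finset.Icc 1 k, ∀ g ∈ Ico (b j) (b (j + 1)), s j ∈ Ico (ℓ g) (u g) :=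
      fun j hj => have hj' := Finset.mem_Icc.1 hj; mem_iInter₂.1 (hs j hj'.1 hj'.2)
    refine ⟨fun h h1 hp => ?_, ?_⟩
    · obtain ⟨j, hj, hhj⟩ := exists_mem_Ico_block hb1 hbk1 ⟨h1, hp⟩
      exact ⟨s j, Finset.mem_image_of_mem s hj, hs' j hj h hhj⟩
    · rw [Finset.card_image_of_injOn (strictMonoOn_of_mem_Ico hmsep
        fun j hj => hs' j hj (m j) (hm j hj)).injOn, Nat.card_Icc, Nat.add_sub_cancel]
  choose! s hs using hblock
  obtain ⟨hcover, hcard⟩ := hpierce s hs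
  refine ⟨le_antisymm (Nat.sInf_le ⟨_, hcard, hcover⟩) (le_csInf ⟨_, _, hcard, hcover⟩ ?_), hpierce⟩
  rintro n ⟨S, rfl, hS⟩
  have hpierce_reps : ∀ j ∈ Finset.Icc 1 k, ∃ y ∈ S, y ∈ Ico (ℓ (m j)) (u (m j)) := fun j hj =>
    have hmj := Ico_block_subset_Icc hb1 hbk1 hmono hj (hm j hj)
    hS (m j) hmj.1 hmj.2
  simpa using Finset.card_le_card_of_forall_exists_mem_Ico hmsep hpierce_reps

/-- Given sorted nonempty half-open intervals `[ℓ h, u h)` for `h = 1,…,p` and block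
boundaries `1 = b 1 < b 2 < … < b (k+1) = p+1` such that each block has nonempty
intersection and `ℓ (b (j+1)) ≥ min_{b j ≤ g < b (j+1)} u g` between consecutive
blocks, the piercing number of the family equals `k`, and any choice of points
`s j` in the block intersections gives a minimum-cardinality piercing set
`{s 1, …, s k}` (it pierces the family and has exactly `k` elements). -/
theorem min_intset_blocks
    (p : ℕ) (hp : 1 ≤ p) (ℓ u : ℕ → ℝ)
    (hne : ∀ h, 1 ≤ h → h ≤ p → ℓ h < u h)
    (hsorted : ∀ h, 1 ≤ h → h < p → ℓ h ≤ ℓ (h + 1))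
    (b : ℕ → ℕ) (k : ℕ)
    (hb1 : b 1 = 1) (hbk1 : b (k + 1) = p + 1)
    (hmono : ∀ j, 1 ≤ j → j ≤ k → b j < b (j + 1))
    (hblock : ∀ j, 1 ≤ j → j ≤ k →
      (⋂ g ∈ Set.Ico (b j) (b (j + 1)), Set.Ico (ℓ g) (u g)).Nonempty)
    (hsep : ∀ j, 1 ≤ j → j ≤ k - 1 →
      sInf (u '' Set.Ico (b j) (b (j + 1))) ≤ ℓ (b (j + 1))) :
    sInf {n | ∃ S : Finset ℝ, S.card = n ∧
        ∀ h, 1 ≤ h → h ≤ p → ∃ x ∈ S, x ∈ Set.Ico (ℓ h) (u h)} = k ∧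
    ∀ s : ℕ → ℝ,
      (∀ j, 1 ≤ j → j ≤ k →
        s j ∈ ⋂ g ∈ Set.Ico (b j) (b (j + 1)), Set.Ico (ℓ g) (u g)) →
      (∀ h, 1 ≤ h → h ≤ p →
        ∃ x ∈ (Finset.Icc 1 k).image s, x ∈ Set.Ico (ℓ h) (u h)) ∧
      ((Finset.Icc 1 k).image s).card = k :=
  min_intset_blocks_general p ℓ u hsorted b k hb1 hbk1 hmono hblock hsep
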